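/- arXiv:2507.13330 — 2 statements merged into one kernel-verified Lean document; each statement's English description precedes it below -/
import Mathlib

section
/- Weighted Poincaré inequality for the degenerate-weight space (Lemma 4.1): There exist ε₀ > 0 and C > 0, depending only on the admissibility constants of a and not on ε, such that for every 0 < ε < ε₀ and every function u : [0,1) → ℝ that is locally absolutely continuous on [0,1) with u(0) = 0 and ∫₀¹ a(s)⁴ u'(s)² ds < ∞, one has ( ∫₀¹ u(s)² ds )^{1/2} ≤ C ( ∫₀¹ a(s)⁴ u'(s)² ds )^{1/2}. -/
noncomputable section

open Set MeasureTheory Real Filter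

abbrev E3 := EuclideanSpace ℝ (Fin 3)

namespace BloodVessel

/-- Euclidean dot product on `E3`. -/
def dot3 (x y : E3) : ℝ := ∑ i, x i * y i

/-- `i`-th partial derivative of a scalar field. -/
def coordDeriv (f : E3 → ℝ) (x : E3) (i : Fin 3) : ℝ :=
  fderiv ℝ f x (EuclideanSpace.single i 1)

/-- Jacobian matrix of a vector field: `(jacM u x) i j = ∂_j u_i (x)`. -/
def jacM (u : E3 → E3) (x : E3) : Fin 3 → Fin 3 → ℝ :=
  fun i j => fderiv ℝ u x (EuclideanSpace.single j 1) i

/-- Squared Frobenius norm of a 3×3 matrix. -/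
def frobSq (M : Fin 3 → Fin 3 → ℝ) : ℝ := ∑ i, ∑ j, (M i j) ^ 2

/-- Frobenius inner product of 3×3 matrices. -/
def frobInner (M N : Fin 3 → Fin 3 → ℝ) : ℝ := ∑ i, ∑ j, M i j * N i j

/-- Symmetric gradient `E(u) = (Du + Duᵀ)/2`. -/
def symGrad (u : E3 → E3) (x : E3) : Fin 3 → Fin 3 → ℝ :=
  fun i j => (jacM u x i j + jacM u x j i) / 2

/-- Divergence of a vector field. -/
def divg (u : E3 → E3) (x : E3) : ℝ := ∑ i, jacM u x i i

/-- Gradient of a scalar field. -/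
def gradv (f : E3 → ℝ) (x : E3) : E3 := gradient f x

/-- Laplacian of a scalar field. -/
def lap (f : E3 → ℝ) (x : E3) : ℝ := ∑ i, coordDeriv (fun y => coordDeriv f y i) x i

/-- The centerline geometry: a unit-speed C³ curve in the closed upper half space with a C²
orthonormal Bishop frame `(et, e1, e2)`, base point in the plane `{x₃ = 0}` with tangent
perpendicular to that plane, and no self-intersections (condition `hreg`). -/
structure Geometry where
  X : ℝ → E3
  et : ℝ → E3
  e1 : ℝ → E3
  e2 : ℝ → E3
  k1 : ℝ → ℝ
  k2 : ℝ → ℝ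
  hC3 : ContDiffOn ℝ 3 X (Icc 0 1)
  hX : ∀ s ∈ Icc (0:ℝ) 1, HasDerivWithinAt X (et s) (Icc 0 1) s
  het : ∀ s ∈ Icc (0:ℝ) 1, HasDerivWithinAt et (k1 s • e1 s + k2 s • e2 s) (Icc 0 1) s
  he1 : ∀ s ∈ Icc (0:ℝ) 1, HasDerivWithinAt e1 ((-(k1 s)) • et s) (Icc 0 1) s
  he2 : ∀ s ∈ Icc (0:ℝ) 1, HasDerivWithinAt e2 ((-(k2 s)) • et s) (Icc 0 1) s
  hk1 : ContDiffOn ℝ 1 k1 (Icc 0 1)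
  hk2 : ContDiffOn ℝ 1 k2 (Icc 0 1)
  hunit : ∀ s ∈ Icc (0:ℝ) 1, ‖et s‖ = 1 ∧ ‖e1 s‖ = 1 ∧ ‖e2 s‖ = 1
  horth : ∀ s ∈ Icc (0:ℝ) 1,
    dot3 (et s) (e1 s) = 0 ∧ dot3 (et s) (e2 s) = 0 ∧ dot3 (e1 s) (e2 s) = 0
  hupper : ∀ s ∈ Icc (0:ℝ) 1, 0 ≤ X s 2
  hbase : X 0 2 = 0
  hperp : et 0 0 = 0 ∧ et 0 1 = 0
  hreg : ∃ c > (0:ℝ),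
    (∀ s₁ ∈ Icc (0:ℝ) 1, ∀ s₂ ∈ Icc (0:ℝ) 1, c * |s₁ - s₂| ≤ ‖X s₁ - X s₂‖) ∧
    ∀ s ∈ Ioc (0:ℝ) 1, c * s ≤ X s 2

/-- Maximum curvature `κ⋆ = sup_s |X''(s)|`. -/
def kappaStar (G : Geometry) : ℝ :=
  sSup ((fun s => ‖G.k1 s • G.e1 s + G.k2 s • G.e2 s‖) '' Icc 0 1)

/-- A radius function together with its first two derivatives. -/
structure RadiusData where
  a : ℝ → ℝ
  a' : ℝ → ℝ
  a'' : ℝ → ℝ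

/-- Admissibility of a radius function (Definition 1.1), with admissibility constants
`a₀, δ, Ca, A₁, A₂`. -/
def Admissible (R : RadiusData) (ε a₀ δ Ca A₁ A₂ : ℝ) : Prop :=
  ContinuousOn R.a (Icc 0 1) ∧
  (∀ s ∈ Icc (0:ℝ) 1, R.a s ∈ Icc (0:ℝ) 1) ∧
  (∀ s ∈ Ico (0:ℝ) 1, HasDerivWithinAt R.a (R.a' s) (Ico 0 1) s) ∧
  (∀ s ∈ Ico (0:ℝ) 1, HasDerivWithinAt R.a' (R.a'' s) (Ico 0 1) s) ∧
  ContinuousOn R.a'' (Ico 0 1) ∧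
  (∀ s ∈ Ico (0:ℝ) 1, |R.a s * R.a' s| ≤ A₁) ∧
  (∀ s ∈ Ico (0:ℝ) 1, |(R.a s) ^ 3 * R.a'' s| ≤ A₂) ∧
  sSup (R.a '' Icc (0:ℝ) 1) = 1 ∧
  0 < δ ∧ δ < 1 ∧ 0 < a₀ ∧
  (∀ s ∈ Icc (0:ℝ) (1 - δ), a₀ ≤ R.a s) ∧
  (∀ s ∈ Ioo (1 - δ) 1, |R.a s - Real.sqrt (1 - s ^ 2)| ≤ Ca * ε ^ 2 * Real.sqrt (1 - s ^ 2))

/-- Radial frame vector `e_r(s,θ)`. -/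
def er (G : Geometry) (s θ : ℝ) : E3 := Real.cos θ • G.e1 s + Real.sin θ • G.e2 s

/-- `κ̂(s,θ) = κ₁ cos θ + κ₂ sin θ`. -/
def khat (G : Geometry) (s θ : ℝ) : ℝ := G.k1 s * Real.cos θ + G.k2 s * Real.sin θ

/-- Point `X(s) + r e_r(s,θ)`. -/
def vpt (G : Geometry) (s r θ : ℝ) : E3 := G.X s + r • er G s θ

/-- Point on the lateral surface `Γ_ε`. -/
def surfPt (G : Geometry) (R : RadiusData) (ε s θ : ℝ) : E3 := vpt G s (ε * R.a s) θ

/-- Outward unit normal along `Γ_ε`. -/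
def nrm (G : Geometry) (R : RadiusData) (ε s θ : ℝ) : E3 :=
  (Real.sqrt (1 + (ε * R.a' s) ^ 2))⁻¹ • (er G s θ - (ε * R.a' s) • G.et s)

/-- Surface Jacobian `J_ε(s,θ)`. -/
def Jeps (G : Geometry) (R : RadiusData) (ε s θ : ℝ) : ℝ :=
  ε * R.a s * Real.sqrt ((1 - ε * R.a s * khat G s θ) ^ 2 + (ε * R.a' s) ^ 2)

/-- Volume Jacobian of the curvilinear cylindrical coordinates. -/
def volJac (G : Geometry) (s r θ : ℝ) : ℝ := r * (1 - r * khat G s θ)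

/-- The vessel `V_ε`. -/
def vessel (G : Geometry) (R : RadiusData) (ε : ℝ) : Set E3 :=
  {x | ∃ s ∈ Ioo (0:ℝ) 1, ∃ r ∈ Ico (0:ℝ) (ε * R.a s), ∃ θ ∈ Ico (0:ℝ) (2 * π),
    x = vpt G s r θ}

/-- The bottom cross-section `B_ε`. -/
def bottom (G : Geometry) (R : RadiusData) (ε : ℝ) : Set E3 :=
  closure (vessel G R ε) ∩ {x : E3 | x 2 = 0}

/-- The exterior domain `Ω_ε`. -/
def extDom (G : Geometry) (R : RadiusData) (ε : ℝ) : Set E3 :=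
  {x : E3 | 0 < x 2} \ closure (vessel G R ε)

/-- Volume `|V_ε|`. -/
def vol (G : Geometry) (R : RadiusData) (ε : ℝ) : ℝ := (volume (vessel G R ε)).toReal

/-- Two-dimensional measure `|B_ε|`. -/
def areaB (G : Geometry) (R : RadiusData) (ε : ℝ) : ℝ := (μH[2] (bottom G R ε)).toReal

/-- Surface area `|Γ_ε| = ∫₀¹∫₀^{2π} J_ε dθ ds`. -/
def areaGam (G : Geometry) (R : RadiusData) (ε : ℝ) : ℝ :=
  ∫ s in (0:ℝ)..1, ∫ θ in (0:ℝ)..(2 * π), Jeps G R ε s θ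

/-- `L²` norm of a scalar field on a set. -/
def sL2 (V : Set E3) (f : E3 → ℝ) : ℝ := Real.sqrt (∫ x in V, (f x) ^ 2)

/-- `L²` norm of a vector field on a set. -/
def vL2 (V : Set E3) (u : E3 → E3) : ℝ := Real.sqrt (∫ x in V, ‖u x‖ ^ 2)

/-- `L²` norm of the Jacobian of a vector field on a set. -/
def jacL2 (V : Set E3) (u : E3 → E3) : ℝ := Real.sqrt (∫ x in V, frobSq (jacM u x))

/-- `L²` norm of the gradient of a scalar field on a set. -/
def gradL2 (V : Set E3) (f : E3 → ℝ) : ℝ := Real.sqrt (∫ x in V, ‖gradv f x‖ ^ 2)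

/-- `L²(Γ_ε)` norm of a function given in surface coordinates. -/
def surfL2 (G : Geometry) (R : RadiusData) (ε : ℝ) (g : ℝ → ℝ → ℝ) : ℝ :=
  Real.sqrt (∫ s in (0:ℝ)..1, ∫ θ in (0:ℝ)..(2 * π), (g s θ) ^ 2 * Jeps G R ε s θ)

/-- Normal-normal component of the stress: `(Σ n)·n = 2μ (E(u)n)·n − p`. -/
def stressNN (mu : ℝ) (u : E3 → E3) (p : E3 → ℝ) (x nn : E3) : ℝ :=
  2 * mu * (∑ i, ∑ j, symGrad u x i j * nn i * nn j) - p x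

/-- `(a⁴ p')'` expanded. -/
def dAP (R : RadiusData) (p' p'' : ℝ → ℝ) (s : ℝ) : ℝ :=
  4 * (R.a s) ^ 3 * R.a' s * p' s + (R.a s) ^ 4 * p'' s

/-- `(a⁴ p')''` expanded. -/
def dAP2 (R : RadiusData) (p' p'' p''' : ℝ → ℝ) (s : ℝ) : ℝ :=
  12 * (R.a s) ^ 2 * (R.a' s) ^ 2 * p' s + 4 * (R.a s) ^ 3 * R.a'' s * p' s
    + 8 * (R.a s) ^ 3 * R.a' s * p'' s + (R.a s) ^ 4 * p''' s

/-- Reflection across the plane `{x₃ = 0}`. -/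
def reflect (y : E3) : E3 := y - (2 * y 2) • EuclideanSpace.single 2 1

/-- Neumann Green's function for the upper half space. -/
def GN (x y : E3) : ℝ := (1 / (4 * π)) * (1 / ‖x - y‖ + 1 / ‖x - reflect y‖)

/-- The single-layer operator `S_N[f]`. -/
def SN (G : Geometry) (ε : ℝ) (f : ℝ → ℝ) (x : E3) : ℝ :=
  ∫ t in (0:ℝ)..1, GN x (G.X (Real.sqrt (1 - ε ^ 2) * t)) * f t

/-- Slender-body exterior pressure `q^SB`. -/
def qSBfun (G : Geometry) (R : RadiusData) (ε zeta mu : ℝ) (p' p'' : ℝ → ℝ) (x : E3) : ℝ :=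
  (π / (8 * zeta * mu)) * SN G ε (dAP R p' p'') x

/-- Classical solution of the 3D–3D Darcy–Stokes system. -/
def IsSol33 (G : Geometry) (R : RadiusData) (ε zeta mu kp p₀ : ℝ)
    (u : E3 → E3) (p q : E3 → ℝ) : Prop :=
  ContDiffOn ℝ 2 u (closure (vessel G R ε)) ∧
  ContDiffOn ℝ 1 p (closure (vessel G R ε)) ∧
  ContDiffOn ℝ 2 q (closure (extDom G R ε)) ∧
  Tendsto q (cocompact E3) (nhds 0) ∧
  IntegrableOn (fun x => ‖gradv q x‖ ^ 2) (extDom G R ε) ∧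
  (∀ x ∈ vessel G R ε, ∀ i : Fin 3, -mu * lap (fun y => u y i) x + coordDeriv p x i = 0) ∧
  (∀ x ∈ vessel G R ε, divg u x = 0) ∧
  (∀ x ∈ extDom G R ε, lap q x = 0) ∧
  (∀ s ∈ Ioo (0:ℝ) 1, ∀ θ ∈ Ico (0:ℝ) (2 * π),
    dot3 (u (surfPt G R ε s θ)) (nrm G R ε s θ)
        = -(zeta * ε ^ 4) * dot3 (gradv q (surfPt G R ε s θ)) (nrm G R ε s θ) ∧
    dot3 (u (surfPt G R ε s θ)) (nrm G R ε s θ)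
        = -(kp * ε ^ 3) *
          (stressNN mu u p (surfPt G R ε s θ) (nrm G R ε s θ) + q (surfPt G R ε s θ)) ∧
    u (surfPt G R ε s θ)
        = dot3 (u (surfPt G R ε s θ)) (nrm G R ε s θ) • nrm G R ε s θ) ∧
  (∀ x : E3, x 2 = 0 → x ∉ bottom G R ε → coordDeriv q x 2 = 0) ∧
  (∀ x ∈ bottom G R ε, ∀ i : Fin 3,
    (∑ j, (2 * mu * symGrad u x i j - (if i = j then p x else 0)) * (-(G.et 0 j)))
      = -p₀ * (-(G.et 0 i)))

/-- Classical solution of the 3D–1D Darcy–Poiseuille system. -/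
def IsSol31 (G : Geometry) (R : RadiusData) (ε zeta mu kp p₀ : ℝ)
    (p p' p'' : ℝ → ℝ) (q : E3 → ℝ) : Prop :=
  p 0 = p₀ ∧
  (∀ s ∈ Ico (0:ℝ) 1, HasDerivWithinAt p (p' s) (Ico 0 1) s) ∧
  (∀ s ∈ Ico (0:ℝ) 1, HasDerivWithinAt p' (p'' s) (Ico 0 1) s) ∧
  ContinuousOn p'' (Ico 0 1) ∧
  IntegrableOn (fun s => ((R.a s) ^ 2 * p' s) ^ 2) (Ioo 0 1) ∧
  ContDiffOn ℝ 2 q (closure (extDom G R ε)) ∧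
  Tendsto q (cocompact E3) (nhds 0) ∧
  IntegrableOn (fun x => ‖gradv q x‖ ^ 2) (extDom G R ε) ∧
  (∀ x ∈ extDom G R ε, lap q x = 0) ∧
  (∀ s ∈ Ioo (0:ℝ) 1, ∀ θ ∈ Ico (0:ℝ) (2 * π),
    -(dot3 (gradv q (surfPt G R ε s θ)) (nrm G R ε s θ))
      = (kp / (zeta * ε)) * (p s - q (surfPt G R ε s θ))) ∧
  (∀ s ∈ Ioo (0:ℝ) 1,
    (∫ θ in (0:ℝ)..(2 * π),
        dot3 (gradv q (surfPt G R ε s θ)) (nrm G R ε s θ) * Jeps G R ε s θ)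
      = -(π / (8 * zeta * mu)) * dAP R p' p'' s) ∧
  (∀ x : E3, x 2 = 0 → x ∉ bottom G R ε → coordDeriv q x 2 = 0)

/-- 1D slender-body solution `p^SB` (with its first three derivatives). -/
def IsSB (G : Geometry) (R : RadiusData) (ε mu kp p₀ : ℝ)
    (p p' p'' p''' : ℝ → ℝ) : Prop :=
  p 0 = p₀ ∧
  (∀ s ∈ Ico (0:ℝ) 1, HasDerivWithinAt p (p' s) (Ico 0 1) s) ∧
  (∀ s ∈ Ico (0:ℝ) 1, HasDerivWithinAt p' (p'' s) (Ico 0 1) s) ∧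
  (∀ s ∈ Ico (0:ℝ) 1, HasDerivWithinAt p'' (p''' s) (Ico 0 1) s) ∧
  ContinuousOn p''' (Ico 0 1) ∧
  IntegrableOn (fun s => ((R.a s) ^ 2 * p' s) ^ 2) (Ioo 0 1) ∧
  IntegrableOn (fun s => |dAP R p' p'' s|) (Ioo 0 1) ∧
  (∀ s ∈ Ioo (0:ℝ) 1,
    dAP R p' p'' s
      = 16 * mu * kp * R.a s * p s
        - (8 * mu * kp / π) * R.a s *
          ∫ θ in (0:ℝ)..(2 * π), SN G ε (dAP R p' p'') (surfPt G R ε s θ))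

/-- The cutoff function `φ_ε` with derivative `φ'`. -/
def IsCutoff (ε C₀ : ℝ) (φ φ' : ℝ → ℝ) : Prop :=
  ContDiff ℝ (⊤ : ℕ∞) φ ∧
  (∀ s, HasDerivAt φ (φ' s) s) ∧
  (∀ s ∈ Icc (0:ℝ) 1, φ s ∈ Icc (0:ℝ) 1) ∧
  (∀ s ∈ Icc (0:ℝ) (1 - 2 * ε ^ ((4:ℝ)/3)), φ s = 1) ∧
  (∀ s ∈ Icc (1 - ε ^ ((4:ℝ)/3)) (1:ℝ), φ s = 0) ∧
  (∀ s, |φ' s| ≤ C₀ * ε ^ (-(4:ℝ)/3))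

/-- The Poiseuille-type velocity ansatz `U` in curvilinear coordinates `(s, r, θ)`,
with the `s`-derivative written out. -/
def Uans (G : Geometry) (R : RadiusData) (ε mu : ℝ) (p' p'' φ φ' : ℝ → ℝ)
    (s r θ : ℝ) : E3 :=
  (-(1 / (16 * mu)) *
      (φ' s * (r ^ 3 - 2 * (ε * R.a s) ^ 2 * r) * p' s
        + φ s * (-(4 * ε ^ 2 * R.a s * R.a' s * r)) * p' s
        + φ s * (r ^ 3 - 2 * (ε * R.a s) ^ 2 * r) * p'' s)) • er G s θ
  + ((1 / (4 * mu)) * φ s * (r ^ 2 - (ε * R.a s) ^ 2) * p' s) • G.et s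

/-- `F : E3 → ℝ` represents the function `f(s,r,θ)` on the vessel `V_ε`. -/
def RepSca (G : Geometry) (R : RadiusData) (ε : ℝ) (f : ℝ → ℝ → ℝ → ℝ) (F : E3 → ℝ) : Prop :=
  ∀ s ∈ Ioo (0:ℝ) 1, ∀ r ∈ Ico (0:ℝ) (ε * R.a s), ∀ θ ∈ Ico (0:ℝ) (2 * π),
    F (vpt G s r θ) = f s r θ

/-- `F : E3 → E3` represents the vector field `f(s,r,θ)` on the vessel `V_ε`. -/
def RepVec (G : Geometry) (R : RadiusData) (ε : ℝ) (f : ℝ → ℝ → ℝ → E3) (F : E3 → E3) : Prop :=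
  ∀ s ∈ Ioo (0:ℝ) 1, ∀ r ∈ Ico (0:ℝ) (ε * R.a s), ∀ θ ∈ Ico (0:ℝ) (2 * π),
    F (vpt G s r θ) = f s r θ

end BloodVessel
namespace BloodVessel


open scoped ENNReal NNReal

section WPAux

lemma wp_sqrt_inv_nonneg (t : ℝ) : 0 ≤ ((1 - t) * Real.sqrt (1 - t))⁻¹ := by
  rcases le_or_gt t 1 with h | h
  · exact inv_nonneg.mpr (mul_nonneg (by linarith) (Real.sqrt_nonneg _))
  · rw [Real.sqrt_eq_zero'.mpr (by linarith : (1:ℝ) - t ≤ 0)]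
    simp

lemma wp_hasDerivAt {t : ℝ} (ht : t < 1) :
    HasDerivAt (fun t : ℝ => 2 * (Real.sqrt (1 - t))⁻¹)
      (((1 - t) * Real.sqrt (1 - t))⁻¹) t := by
  have h1 : (0 : ℝ) < 1 - t := by linarith
  have hs0 : Real.sqrt (1 - t) ≠ 0 := ne_of_gt (Real.sqrt_pos.mpr h1)
  have hinner : HasDerivAt (fun x : ℝ => 1 - x) (-1) t := (hasDerivAt_id t).const_sub 1
  have hs : HasDerivAt (fun t : ℝ => Real.sqrt (1 - t))
      (1 / (2 * Real.sqrt (1 - t)) * (-1)) t :=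
    (Real.hasDerivAt_sqrt (ne_of_gt h1)).comp t hinner
  have h := (hs.inv hs0).const_mul 2
  refine h.congr_deriv ?_
  symm
  have hsq : Real.sqrt (1 - t) ^ 2 = 1 - t := Real.sq_sqrt h1.le
  rw [← hsq]
  field_simp
  ring
  rw [hsq, hsq]

lemma wp_int1 {x : ℝ} (hx0 : 0 ≤ x) (hx1 : x < 1) :
    (∫⁻ t in Set.Ioc 0 x, ENNReal.ofReal (((1 - t) * Real.sqrt (1 - t))⁻¹))
      ≤ ENNReal.ofReal (2 * (Real.sqrt (1 - x))⁻¹) := by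
  have hcont : ContinuousOn (fun t : ℝ => ((1 - t) * Real.sqrt (1 - t))⁻¹) (Set.uIcc 0 x) := by
    rw [uIcc_of_le hx0]
    intro t ht
    have h1 : (0:ℝ) < 1 - t := by have := ht.2; linarith
    apply ContinuousWithinAt.inv₀
    · exact (((continuous_const.sub continuous_id).mul
        (Real.continuous_sqrt.comp (continuous_const.sub continuous_id))).continuousWithinAt)
    · exact ne_of_gt (mul_pos h1 (Real.sqrt_pos.mpr h1))
  have hii : IntervalIntegrable (fun t : ℝ => ((1 - t) * Real.sqrt (1 - t))⁻¹) volume 0 x :=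
    hcont.intervalIntegrable
  have hint : IntegrableOn (fun t : ℝ => ((1 - t) * Real.sqrt (1 - t))⁻¹) (Set.Ioc 0 x) :=
    (intervalIntegrable_iff_integrableOn_Ioc_of_le hx0).mp hii
  rw [← MeasureTheory.ofReal_integral_eq_lintegral_ofReal hint
      (ae_of_all _ fun t => wp_sqrt_inv_nonneg t)]
  apply ENNReal.ofReal_le_ofReal
  have hval : (∫ t in (0:ℝ)..x, ((1 - t) * Real.sqrt (1 - t))⁻¹)
      = 2 * (Real.sqrt (1 - x))⁻¹ - 2 * (Real.sqrt (1 - 0))⁻¹ := by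
    apply intervalIntegral.integral_eq_sub_of_hasDerivAt
    · intro t ht
      rw [uIcc_of_le hx0] at ht
      exact wp_hasDerivAt (lt_of_le_of_lt ht.2 hx1)
    · exact hii
  rw [← intervalIntegral.integral_of_le hx0, hval, show (1:ℝ) - 0 = 1 by ring, Real.sqrt_one]
  have : (0:ℝ) ≤ (Real.sqrt (1 - x))⁻¹ := inv_nonneg.mpr (Real.sqrt_nonneg _)
  norm_num

lemma wp_int2 {t : ℝ} (ht0 : 0 ≤ t) (ht1 : t < 1) :
    (∫⁻ x in Set.Ico t 1, ENNReal.ofReal ((Real.sqrt (1 - x))⁻¹))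
      ≤ ENNReal.ofReal (2 * Real.sqrt (1 - t)) := by
  rw [Measure.restrict_congr_set Ico_ae_eq_Ioc]
  have heq : ∀ x ∈ Set.Ioc t 1, ENNReal.ofReal ((Real.sqrt (1 - x))⁻¹)
      = ENNReal.ofReal ((1 - x) ^ (-(1/2) : ℝ)) := by
    intro x hx
    congr 1
    rw [Real.rpow_neg (by linarith [hx.2] : (0:ℝ) ≤ 1 - x), ← Real.sqrt_eq_rpow]
  rw [setLIntegral_congr_fun measurableSet_Ioc heq]
  have hii : IntervalIntegrable (fun x : ℝ => (1 - x) ^ (-(1/2) : ℝ)) volume t 1 := by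
    have h := (intervalIntegral.intervalIntegrable_rpow'
      (a := 0) (b := 1 - t) (r := -(1/2)) (by norm_num)).comp_sub_left 1
    simpa using h.symm
  have hint : IntegrableOn (fun x : ℝ => (1 - x) ^ (-(1/2) : ℝ)) (Set.Ioc t 1) :=
    (intervalIntegrable_iff_integrableOn_Ioc_of_le ht1.le).mp hii
  rw [← MeasureTheory.ofReal_integral_eq_lintegral_ofReal hint ?nn]
  case nn =>
    filter_upwards [ae_restrict_mem measurableSet_Ioc] with x hx
    exact Real.rpow_nonneg (by linarith [hx.2] : (0:ℝ) ≤ 1 - x) _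
  · apply ENNReal.ofReal_le_ofReal
    rw [← intervalIntegral.integral_of_le ht1.le]
    have : (∫ x in t..(1:ℝ), (1 - x) ^ (-(1/2) : ℝ))
        = ∫ y in (0:ℝ)..(1 - t), y ^ (-(1/2) : ℝ) := by
      have := intervalIntegral.integral_comp_sub_left (a := t) (b := 1)
        (fun y : ℝ => y ^ (-(1/2) : ℝ)) 1
      simpa using this
    rw [this, integral_rpow (Or.inl (by norm_num))]
    rw [Real.zero_rpow (by norm_num)]
    rw [show (-(1/2) : ℝ) + 1 = 1/2 by norm_num, ← Real.sqrt_eq_rpow]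
    ring_nf
    exact le_refl _

lemma wp_halfpow (y : ℝ≥0∞) : (y ^ ((1:ℝ)/2)) ^ (2:ℕ) = y := by
  rw [← ENNReal.rpow_natCast (y ^ ((1:ℝ)/2)) 2, ← ENNReal.rpow_mul]
  norm_num

end WPAux

/-- **Weighted Poincaré inequality for the degenerate-weight space** (Lemma 4.1).
Stated with both sides squared; the left-hand side is a lower Lebesgue integral so that
no integrability of `u²` is presupposed. -/
theorem weighted_poincare (a₀ δ Ca A₁ A₂ : ℝ) :
    ∃ ε₀ > (0:ℝ), ∃ C > (0:ℝ),
      ∀ ε : ℝ, 0 < ε → ε < ε₀ →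
      ∀ R : RadiusData, Admissible R ε a₀ δ Ca A₁ A₂ →
      ∀ u v : ℝ → ℝ,
        u 0 = 0 →
        (∀ x ∈ Ico (0:ℝ) 1,
          IntervalIntegrable v volume 0 x ∧ u x = ∫ t in (0:ℝ)..x, v t) →
        IntegrableOn (fun s => (R.a s) ^ 4 * (v s) ^ 2) (Ioo 0 1) →
        (∫⁻ s in Ioo (0:ℝ) 1, ENNReal.ofReal ((u s) ^ 2))
          ≤ ENNReal.ofReal
              ((C * Real.sqrt (∫ s in Ioo (0:ℝ) 1, (R.a s) ^ 4 * (v s) ^ 2)) ^ 2) := by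
  have hM1 : (1:ℝ) ≤ max Ca 1 := le_max_right _ _
  have hM0 : (0:ℝ) < 2 * max Ca 1 := by linarith
  refine ⟨(Real.sqrt (2 * max Ca 1))⁻¹, by positivity,
    2 * (min a₀ (1/2 : ℝ))⁻¹ ^ 2 + 1,
    by nlinarith [sq_nonneg (min a₀ (1/2:ℝ))⁻¹], ?_⟩
  intro ε hε hεε R hR u v hu0 huv hint
  obtain ⟨ha_cont, ha_mem, _, _, _, _, _, _, hδ0, hδ1, ha₀, hlow, hnear⟩ := hR
  set c : ℝ := min a₀ (1/2) with hcdef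
  have hc0 : 0 < c := lt_min ha₀ (by norm_num)
  -- smallness of ε
  have hCaε : Ca * ε ^ 2 ≤ 1 / 2 := by
    have hε2 : ε ^ 2 < ((Real.sqrt (2 * max Ca 1))⁻¹) ^ 2 :=
      pow_lt_pow_left₀ hεε hε.le (by norm_num)
    rw [inv_pow, Real.sq_sqrt hM0.le] at hε2
    have h1 : Ca * ε ^ 2 ≤ max Ca 1 * ε ^ 2 :=
      mul_le_mul_of_nonneg_right (le_max_left _ _) (sq_nonneg _)
    have h2 : max Ca 1 * ε ^ 2 ≤ max Ca 1 * (2 * max Ca 1)⁻¹ :=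
      mul_le_mul_of_nonneg_left hε2.le (by linarith)
    have h3 : max Ca 1 * (2 * max Ca 1)⁻¹ = 1 / 2 := by
      field_simp
    linarith
  -- pointwise lower bound for the radius
  have hca : ∀ s ∈ Set.Ico (0:ℝ) 1, c * Real.sqrt (1 - s) ≤ R.a s := by
    intro s hs
    obtain ⟨hs0, hs1⟩ := hs
    have hsqle : Real.sqrt (1 - s) ≤ 1 := Real.sqrt_le_one.mpr (by linarith)
    rcases le_or_gt s (1 - δ) with h | h
    · have h1 : a₀ ≤ R.a s := hlow s ⟨hs0, h⟩
      have h2 : c * Real.sqrt (1 - s) ≤ c * 1 :=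
        mul_le_mul_of_nonneg_left hsqle hc0.le
      have h3 : c ≤ a₀ := min_le_left _ _
      linarith
    · have h2 := hnear s ⟨h, hs1⟩
      have habs := abs_le.mp h2
      have hss : s ^ 2 ≤ s := by nlinarith
      have hsub : Real.sqrt (1 - s) ≤ Real.sqrt (1 - s ^ 2) :=
        Real.sqrt_le_sqrt (by linarith)
      have hsn : 0 ≤ Real.sqrt (1 - s ^ 2) := Real.sqrt_nonneg _
      have hc12 : c ≤ 1 / 2 := min_le_right _ _
      have key : (1/2) * Real.sqrt (1 - s ^ 2) ≤ R.a s := by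
        linarith [habs.1, mul_le_mul_of_nonneg_right hCaε hsn]
      have h0 : 0 ≤ Real.sqrt (1 - s) := Real.sqrt_nonneg _
      have hcs : c * Real.sqrt (1 - s) ≤ (1/2) * Real.sqrt (1 - s ^ 2) := by
        have := mul_le_mul_of_nonneg_right hc12 h0
        linarith [hsub]
      linarith
  have hapos : ∀ s ∈ Set.Ioo (0:ℝ) 1, 0 < R.a s := by
    intro s hs
    have hsp : 0 < Real.sqrt (1 - s) := Real.sqrt_pos.mpr (by linarith [hs.2])
    exact lt_of_lt_of_le (mul_pos hc0 hsp) (hca s ⟨hs.1.le, hs.2⟩)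
  -- abbreviations
  set k : ℝ := (c ^ 4)⁻¹ with hkdef
  have hk0 : 0 < k := by positivity
  set w : ℝ → ℝ := fun t => (Real.sqrt (1 - t))⁻¹ with hwdef
  have hwmeas : Measurable w :=
    ((Real.continuous_sqrt.comp (continuous_const.sub continuous_id)).measurable).inv
  set Fr : ℝ → ℝ := fun t => R.a t ^ 4 * v t ^ 2 * w t with hFrdef
  have hFr_nonneg : ∀ t, 0 ≤ Fr t := by
    intro t
    apply mul_nonneg (mul_nonneg (by positivity) (sq_nonneg _))
    exact inv_nonneg.mpr (Real.sqrt_nonneg _)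
  have hFr_aesm : AEStronglyMeasurable Fr (volume.restrict (Set.Ioo 0 1)) :=
    hint.aestronglyMeasurable.mul hwmeas.aestronglyMeasurable
  set Fm : ℝ → ℝ := hFr_aesm.mk Fr with hFmdef
  have hFm_meas : StronglyMeasurable Fm := hFr_aesm.stronglyMeasurable_mk
  have hFm_ae : Fr =ᵐ[volume.restrict (Set.Ioo 0 1)] Fm := hFr_aesm.ae_eq_mk
  set F' : ℝ → ℝ≥0∞ := fun t => ENNReal.ofReal (Fm t) with hF'def
  have hF'meas : Measurable F' := hFm_meas.measurable.ennreal_ofReal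
  have hF'top : ∀ t, F' t ≠ ∞ := fun t => ENNReal.ofReal_ne_top
  set H : ℝ → ℝ≥0∞ := fun x => ENNReal.ofReal (2 * k * w x) with hHdef
  have hHmeas : Measurable H := (measurable_const.mul hwmeas).ennreal_ofReal
  have hHtop : ∀ x, H x ≠ ∞ := fun x => ENNReal.ofReal_ne_top
  -- Step A : pointwise weighted Cauchy-Schwarz bound
  have stepA : ∀ x ∈ Set.Ioo (0:ℝ) 1,
      ENNReal.ofReal (u x ^ 2) ≤ (∫⁻ t in Set.Ioc 0 x, ENNReal.ofReal (Fr t)) * H x := by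
    intro x hx
    obtain ⟨hx0, hx1⟩ := hx
    obtain ⟨hvint, hux⟩ := huv x ⟨hx0.le, hx1⟩
    have hsub1 : Set.Ioc 0 x ⊆ Set.Ioo (0:ℝ) 1 := fun t ht => ⟨ht.1, lt_of_le_of_lt ht.2 hx1⟩
    have hsub2 : Set.Ioc 0 x ⊆ Set.Icc (0:ℝ) 1 := fun t ht => ⟨ht.1.le, (lt_of_le_of_lt ht.2 hx1).le⟩
    have hvI : IntegrableOn v (Set.Ioc 0 x) :=
      (intervalIntegrable_iff_integrableOn_Ioc_of_le hx0.le).mp hvint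
    have h1 : |u x| ≤ ∫ t in Set.Ioc 0 x, |v t| := by
      rw [hux]
      calc |∫ t in (0:ℝ)..x, v t| ≤ ∫ t in (0:ℝ)..x, |v t| :=
            intervalIntegral.abs_integral_le_integral_abs hx0.le
        _ = _ := intervalIntegral.integral_of_le hx0.le
    have h2 : ENNReal.ofReal (u x ^ 2) ≤ (∫⁻ t in Set.Ioc 0 x, ENNReal.ofReal |v t|) ^ (2:ℕ) := by
      rw [← sq_abs (u x), ENNReal.ofReal_pow (abs_nonneg _),
          ← MeasureTheory.ofReal_integral_eq_lintegral_ofReal hvI.abs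
            (ae_of_all _ fun t => abs_nonneg _)]
      gcongr
    set Gr : ℝ → ℝ := fun t => ((R.a t)⁻¹) ^ 4 * Real.sqrt (1 - t) with hGrdef
    set f : ℝ → ℝ≥0∞ := fun t => ENNReal.ofReal (Fr t) ^ ((1:ℝ)/2) with hfdef
    set g : ℝ → ℝ≥0∞ := fun t => ENNReal.ofReal (Gr t) ^ ((1:ℝ)/2) with hgdef
    have hf_ae : AEMeasurable f (volume.restrict (Set.Ioc 0 x)) := by
      have hm : AEStronglyMeasurable Fr (volume.restrict (Set.Ioc 0 x)) :=
        hFr_aesm.mono_measure (Measure.restrict_mono hsub1 le_rfl)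
      exact hm.aemeasurable.ennreal_ofReal.pow aemeasurable_const
    have ha_aem : AEMeasurable R.a (volume.restrict (Set.Ioc 0 x)) :=
      (ha_cont.aemeasurable measurableSet_Icc).mono_measure (Measure.restrict_mono hsub2 le_rfl)
    have hg_ae : AEMeasurable g (volume.restrict (Set.Ioc 0 x)) := by
      have : AEMeasurable Gr (volume.restrict (Set.Ioc 0 x)) :=
        (ha_aem.inv.pow aemeasurable_const).mul
          (Real.continuous_sqrt.comp (continuous_const.sub continuous_id)).measurable.aemeasurable
      exact this.ennreal_ofReal.pow aemeasurable_const
    have hpt : ∀ t ∈ Set.Ioc 0 x, ENNReal.ofReal |v t| = (f * g) t := by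
      intro t ht
      have ht1 : t < 1 := lt_of_le_of_lt ht.2 hx1
      have hst : 0 < Real.sqrt (1 - t) := Real.sqrt_pos.mpr (by linarith)
      have hat : 0 < R.a t := hapos t ⟨ht.1, ht1⟩
      have hmul : Fr t * Gr t = v t ^ 2 := by
        simp only [hFrdef, hGrdef, hwdef]
        field_simp
      show ENNReal.ofReal |v t| = f t * g t
      rw [hfdef, hgdef]
      simp only
      rw [← ENNReal.mul_rpow_of_nonneg _ _ (by norm_num : (0:ℝ) ≤ 1/2),
          ← ENNReal.ofReal_mul (hFr_nonneg t), hmul,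
          ← sq_abs (v t), ENNReal.ofReal_pow (abs_nonneg _),
          ← ENNReal.rpow_natCast (ENNReal.ofReal |v t|) 2, ← ENNReal.rpow_mul]
      norm_num
    have hconj : Real.HolderConjugate 2 2 := ⟨by norm_num, by norm_num, by norm_num⟩
    have hholder := ENNReal.lintegral_mul_le_Lp_mul_Lq
      (volume.restrict (Set.Ioc 0 x)) hconj hf_ae hg_ae
    have hfg : (∫⁻ t in Set.Ioc 0 x, ENNReal.ofReal |v t|)
        = ∫⁻ t in Set.Ioc 0 x, (f * g) t :=
      setLIntegral_congr_fun measurableSet_Ioc hpt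
    have hfp : (∫⁻ t in Set.Ioc 0 x, f t ^ (2:ℝ))
        = ∫⁻ t in Set.Ioc 0 x, ENNReal.ofReal (Fr t) := by
      refine lintegral_congr fun t => ?_
      rw [hfdef]
      simp only
      rw [← ENNReal.rpow_mul]
      norm_num
    have hgbound : (∫⁻ t in Set.Ioc 0 x, g t ^ (2:ℝ)) ≤ H x := by
      have hptg : ∀ t ∈ Set.Ioc 0 x, g t ^ (2:ℝ)
          ≤ ENNReal.ofReal (k * ((1 - t) * Real.sqrt (1 - t))⁻¹) := by
        intro t ht
        have ht1 : t < 1 := lt_of_le_of_lt ht.2 hx1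
        have hst : 0 < Real.sqrt (1 - t) := Real.sqrt_pos.mpr (by linarith)
        have hat : 0 < R.a t := hapos t ⟨ht.1, ht1⟩
        have hg2 : g t ^ (2:ℝ) = ENNReal.ofReal (Gr t) := by
          rw [hgdef]
          simp only
          rw [← ENNReal.rpow_mul]
          norm_num
        rw [hg2]
        apply ENNReal.ofReal_le_ofReal
        have h4 : (R.a t)⁻¹ ≤ (c * Real.sqrt (1 - t))⁻¹ :=
          inv_anti₀ (by positivity) (hca t ⟨ht.1.le, ht1⟩)
        have step1 : Gr t ≤ ((c * Real.sqrt (1 - t))⁻¹) ^ 4 * Real.sqrt (1 - t) := by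
          rw [hGrdef]
          simp only
          gcongr
        have step2 : ((c * Real.sqrt (1 - t))⁻¹) ^ 4 * Real.sqrt (1 - t)
            = k * ((1 - t) * Real.sqrt (1 - t))⁻¹ := by
          have hsq : Real.sqrt (1 - t) ^ 2 = 1 - t := Real.sq_sqrt (by linarith)
          rw [hkdef, ← hsq]
          field_simp
          ring
          rw [hsq, hsq]
        rw [← step2]
        exact step1
      calc (∫⁻ t in Set.Ioc 0 x, g t ^ (2:ℝ))
          ≤ ∫⁻ t in Set.Ioc 0 x, ENNReal.ofReal (k * ((1 - t) * Real.sqrt (1 - t))⁻¹) := by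
            apply lintegral_mono_ae
            filter_upwards [ae_restrict_mem measurableSet_Ioc] with t ht
            exact hptg t ht
        _ = ENNReal.ofReal k * ∫⁻ t in Set.Ioc 0 x,
              ENNReal.ofReal (((1 - t) * Real.sqrt (1 - t))⁻¹) := by
            rw [← lintegral_const_mul' _ _ ENNReal.ofReal_ne_top]
            refine lintegral_congr fun t => ?_
            rw [← ENNReal.ofReal_mul hk0.le]
        _ ≤ ENNReal.ofReal k * ENNReal.ofReal (2 * (Real.sqrt (1 - x))⁻¹) := by
            gcongr
            exact wp_int1 hx0.le hx1
        _ = H x := by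
            simp only [hHdef, hwdef]
            rw [← ENNReal.ofReal_mul hk0.le]
            congr 1
            ring
    calc ENNReal.ofReal (u x ^ 2)
        ≤ (∫⁻ t in Set.Ioc 0 x, ENNReal.ofReal |v t|) ^ (2:ℕ) := h2
      _ = (∫⁻ t in Set.Ioc 0 x, (f * g) t) ^ (2:ℕ) := by rw [hfg]
      _ ≤ ((∫⁻ t in Set.Ioc 0 x, f t ^ (2:ℝ)) ^ ((1:ℝ)/2)
            * (∫⁻ t in Set.Ioc 0 x, g t ^ (2:ℝ)) ^ ((1:ℝ)/2)) ^ (2:ℕ) := by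
          gcongr
      _ = (∫⁻ t in Set.Ioc 0 x, f t ^ (2:ℝ)) * (∫⁻ t in Set.Ioc 0 x, g t ^ (2:ℝ)) := by
          rw [mul_pow, wp_halfpow, wp_halfpow]
      _ ≤ (∫⁻ t in Set.Ioc 0 x, ENNReal.ofReal (Fr t)) * H x := by
          rw [hfp]
          exact mul_le_mul_right hgbound _
  -- replace Fr by its measurable version
  have hFF' : ∀ x ∈ Set.Ioo (0:ℝ) 1,
      (∫⁻ t in Set.Ioc 0 x, ENNReal.ofReal (Fr t)) = ∫⁻ t in Set.Ioc 0 x, F' t := by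
    intro x hx
    apply lintegral_congr_ae
    have hsub : Set.Ioc 0 x ⊆ Set.Ioo (0:ℝ) 1 := fun t ht => ⟨ht.1, lt_of_le_of_lt ht.2 hx.2⟩
    have := ae_restrict_of_ae_restrict_of_subset hsub hFm_ae
    filter_upwards [this] with t ht
    rw [hF'def]
    simp only
    rw [ht]
  set I : ℝ := ∫ s in Set.Ioo (0:ℝ) 1, R.a s ^ 4 * v s ^ 2 with hIdef
  have hI0 : 0 ≤ I := setIntegral_nonneg measurableSet_Ioo (fun s _ => by positivity)
  set f2 : ℝ → ℝ → ℝ≥0∞ :=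
    fun x t => (Set.Ioc (0:ℝ) x).indicator (fun t => F' t * H x) t with hf2def
  have hf2meas : Measurable (Function.uncurry f2) := by
    have heq : (Function.uncurry f2)
        = Set.indicator {z : ℝ × ℝ | 0 < z.2 ∧ z.2 ≤ z.1} (fun z => F' z.2 * H z.1) := by
      funext z
      show f2 z.1 z.2 = _
      simp only [hf2def]
      by_cases h : 0 < z.2 ∧ z.2 ≤ z.1
      · rw [Set.indicator_of_mem (Set.mem_Ioc.mpr h)]
        exact (Set.indicator_of_mem
          (show z ∈ {z : ℝ × ℝ | 0 < z.2 ∧ z.2 ≤ z.1} from h)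
          (fun z : ℝ × ℝ => F' z.2 * H z.1)).symm
      · rw [Set.indicator_of_notMem (fun hc => h (Set.mem_Ioc.mp hc))]
        exact (Set.indicator_of_notMem
          (show z ∉ {z : ℝ × ℝ | 0 < z.2 ∧ z.2 ≤ z.1} from h)
          (fun z : ℝ × ℝ => F' z.2 * H z.1)).symm
    rw [heq]
    exact Measurable.indicator
      ((hF'meas.comp measurable_snd).mul (hHmeas.comp measurable_fst))
      ((measurableSet_lt measurable_const measurable_snd).inter
        (measurableSet_le measurable_snd measurable_fst))
  calc (∫⁻ s in Set.Ioo (0:ℝ) 1, ENNReal.ofReal (u s ^ 2))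
      ≤ ∫⁻ x in Set.Ioo (0:ℝ) 1, (∫⁻ t in Set.Ioc 0 x, F' t) * H x := by
        apply lintegral_mono_ae
        filter_upwards [ae_restrict_mem measurableSet_Ioo] with x hx
        rw [← hFF' x hx]
        exact stepA x hx
    _ = ∫⁻ x in Set.Ioo (0:ℝ) 1, ∫⁻ t in Set.Ioo (0:ℝ) 1, f2 x t := by
        apply lintegral_congr_ae
        filter_upwards [ae_restrict_mem measurableSet_Ioo] with x hx
        have hsub : Set.Ioc 0 x ⊆ Set.Ioo (0:ℝ) 1 := fun t ht => ⟨ht.1, lt_of_le_of_lt ht.2 hx.2⟩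
        have : ∫⁻ t in Set.Ioo (0:ℝ) 1, f2 x t = (∫⁻ t in Set.Ioc 0 x, F' t) * H x := by
          simp only [hf2def]
          rw [lintegral_indicator measurableSet_Ioc,
              Measure.restrict_restrict measurableSet_Ioc,
              Set.inter_eq_left.mpr hsub,
              lintegral_mul_const' _ _ (hHtop x)]
        rw [this]
    _ = ∫⁻ t in Set.Ioo (0:ℝ) 1, ∫⁻ x in Set.Ioo (0:ℝ) 1, f2 x t :=
        lintegral_lintegral_swap hf2meas.aemeasurable
    _ ≤ ∫⁻ t in Set.Ioo (0:ℝ) 1,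
          F' t * (ENNReal.ofReal (2 * k) * ENNReal.ofReal (2 * Real.sqrt (1 - t))) := by
        apply lintegral_mono_ae
        filter_upwards [ae_restrict_mem measurableSet_Ioo] with t ht
        have hrw : ∀ x : ℝ, f2 x t = (Set.Ici t).indicator (fun x => F' t * H x) x := by
          intro x
          simp only [hf2def]
          by_cases h : t ≤ x
          · rw [Set.indicator_of_mem (Set.mem_Ioc.mpr ⟨ht.1, h⟩)]
            exact (Set.indicator_of_mem (Set.mem_Ici.mpr h) (fun x => F' t * H x)).symm
          · rw [Set.indicator_of_notMem (fun hc => h (Set.mem_Ioc.mp hc).2)]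
            exact (Set.indicator_of_notMem (fun hc => h (Set.mem_Ici.mp hc))
              (fun x => F' t * H x)).symm
        have hseteq : Set.Ici t ∩ Set.Ioo (0:ℝ) 1 = Set.Ico t 1 := by
          ext y
          simp only [Set.mem_inter_iff, Set.mem_Ici, Set.mem_Ioo, Set.mem_Ico]
          constructor
          · rintro ⟨h1, _, h3⟩; exact ⟨h1, h3⟩
          · rintro ⟨h1, h2⟩; exact ⟨h1, lt_of_lt_of_le ht.1 h1, h2⟩
        calc (∫⁻ x in Set.Ioo (0:ℝ) 1, f2 x t)
            = ∫⁻ x in Set.Ioo (0:ℝ) 1, (Set.Ici t).indicator (fun x => F' t * H x) x :=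
              lintegral_congr fun x => hrw x
          _ = ∫⁻ x in Set.Ico t 1, F' t * H x := by
              rw [lintegral_indicator measurableSet_Ici,
                  Measure.restrict_restrict measurableSet_Ici, hseteq]
          _ = F' t * ∫⁻ x in Set.Ico t 1, H x := lintegral_const_mul' _ _ (hF'top t)
          _ ≤ F' t * (ENNReal.ofReal (2 * k) * ENNReal.ofReal (2 * Real.sqrt (1 - t))) := by
              apply mul_le_mul_right
              calc (∫⁻ x in Set.Ico t 1, H x)
                  = ENNReal.ofReal (2 * k)
                      * ∫⁻ x in Set.Ico t 1, ENNReal.ofReal ((Real.sqrt (1 - x))⁻¹) := by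
                    rw [← lintegral_const_mul' _ _ ENNReal.ofReal_ne_top]
                    refine lintegral_congr fun x => ?_
                    simp only [hHdef, hwdef]
                    rw [← ENNReal.ofReal_mul (by positivity)]
                _ ≤ ENNReal.ofReal (2 * k) * ENNReal.ofReal (2 * Real.sqrt (1 - t)) := by
                    apply mul_le_mul_right
                    exact wp_int2 ht.1.le ht.2
    _ = ∫⁻ t in Set.Ioo (0:ℝ) 1, ENNReal.ofReal (4 * k * (R.a t ^ 4 * v t ^ 2)) := by
        apply lintegral_congr_ae
        filter_upwards [hFm_ae, ae_restrict_mem measurableSet_Ioo] with t hFt ht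
        have hF'eq : F' t = ENNReal.ofReal (Fr t) := by
          rw [hF'def]
          simp only
          rw [← hFt]
        rw [hF'eq]
        have hst : 0 < Real.sqrt (1 - t) := Real.sqrt_pos.mpr (by linarith [ht.2])
        rw [← ENNReal.ofReal_mul (by positivity : (0:ℝ) ≤ 2 * k),
            ← ENNReal.ofReal_mul (hFr_nonneg t)]
        congr 1
        simp only [hFrdef, hwdef]
        field_simp
        ring
    _ = ENNReal.ofReal (∫ t in Set.Ioo (0:ℝ) 1, 4 * k * (R.a t ^ 4 * v t ^ 2)) := by
        rw [MeasureTheory.ofReal_integral_eq_lintegral_ofReal (hint.const_mul _)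
          (ae_of_all _ fun t => by positivity)]
    _ ≤ ENNReal.ofReal
          (((2 * (min a₀ (1/2 : ℝ))⁻¹ ^ 2 + 1) * Real.sqrt I) ^ 2) := by
        apply ENNReal.ofReal_le_ofReal
        rw [MeasureTheory.integral_const_mul, mul_pow, Real.sq_sqrt hI0, ← hcdef]
        have h1 : 4 * k ≤ (2 * c⁻¹ ^ 2 + 1) ^ 2 := by
          rw [hkdef, ← inv_pow]
          nlinarith [sq_nonneg c⁻¹, sq_nonneg (c⁻¹ ^ 2)]
        exact mul_le_mul_of_nonneg_right h1 hI0

end BloodVessel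
end
end

section
/- Hardy-type inequality used in the weighted Poincaré lemma: If u : [0,1) → ℝ is locally absolutely continuous with u(0) = 0, then ∫₀¹ u(t)² dt ≤ 4 ∫₀¹ (1−t)² u'(t)² dt (both sides possibly infinite, the right-hand side interpreted as the integral of (1−t)² u'(t)² over [0,1)). -/
/-! Schur test with the weight `(1 - t) ^ (3/2)`. Cauchy–Schwarz applied to `u x = ∫₀ˣ v` gives
`u x ^ 2 ≤ (∫₀ˣ (1 - t) ^ (-3/2) dt) * ∫₀ˣ (1 - t) ^ (3/2) v t ^ 2 dt`, and the first factor is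
at most `2 (1 - x) ^ (-1/2)`. Integrating in `x` and exchanging the order of integration, each `t`
picks up `∫ₜ¹ 2 (1 - x) ^ (-1/2) dx = 4 (1 - t) ^ (1/2)`, which turns `(1 - t) ^ (3/2)` into
`4 (1 - t) ^ 2`. -/

open Set MeasureTheory
open scoped ENNReal

theorem sq_lintegral_mul_le {α : Type*} [MeasurableSpace α] {μ : Measure α} {f g : α → ℝ≥0∞}
    (hf : AEMeasurable f μ) (hg : AEMeasurable g μ) :
    (∫⁻ a, f a * g a ∂μ) ^ 2 ≤ (∫⁻ a, f a ^ 2 ∂μ) * ∫⁻ a, g a ^ 2 ∂μ := by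
  have holder := ENNReal.lintegral_mul_le_Lp_mul_Lq μ Real.HolderConjugate.two_two hf hg
  calc (∫⁻ a, f a * g a ∂μ) ^ 2
      ≤ ((∫⁻ a, f a ^ (2 : ℝ) ∂μ) ^ (1 / 2 : ℝ) * (∫⁻ a, g a ^ (2 : ℝ) ∂μ) ^ (1 / 2 : ℝ)) ^ 2 :=
        pow_le_pow_left₀ zero_le holder 2
    _ = (∫⁻ a, f a ^ 2 ∂μ) * ∫⁻ a, g a ^ 2 ∂μ := by
        simp only [ENNReal.rpow_two, mul_pow, ← ENNReal.rpow_natCast, ← ENNReal.rpow_mul]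
        norm_num

theorem sq_lintegral_enorm_le_mul {α : Type*} [MeasurableSpace α] {μ : Measure α} {f w : α → ℝ}
    (hf : AEMeasurable f μ) (hw : AEMeasurable w μ) (hw_pos : ∀ᵐ a ∂μ, 0 < w a) :
    (∫⁻ a, ‖f a‖ₑ ∂μ) ^ 2
      ≤ (∫⁻ a, ENNReal.ofReal (w a)⁻¹ ∂μ) * ∫⁻ a, ENNReal.ofReal (w a * f a ^ 2) ∂μ := by
  have h_split : ∀ᵐ a ∂μ, ‖f a‖ₑ =
      ENNReal.ofReal (√(w a))⁻¹ * ENNReal.ofReal (√(w a) * |f a|) := by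
    filter_upwards [hw_pos] with a ha
    rw [← ENNReal.ofReal_mul (by positivity), ← mul_assoc,
      inv_mul_cancel₀ (Real.sqrt_pos.2 ha).ne', one_mul, Real.enorm_eq_ofReal_abs]
  calc (∫⁻ a, ‖f a‖ₑ ∂μ) ^ 2
      = (∫⁻ a, ENNReal.ofReal (√(w a))⁻¹ * ENNReal.ofReal (√(w a) * |f a|) ∂μ) ^ 2 := by
        rw [lintegral_congr_ae h_split]
    _ ≤ (∫⁻ a, ENNReal.ofReal (√(w a))⁻¹ ^ 2 ∂μ)
          * ∫⁻ a, ENNReal.ofReal (√(w a) * |f a|) ^ 2 ∂μ :=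
        sq_lintegral_mul_le (by fun_prop) (by fun_prop)
    _ = _ := by
        congr 1 <;> refine lintegral_congr_ae (hw_pos.mono fun a ha => ?_) <;> beta_reduce <;>
          rw [← ENNReal.ofReal_pow (by positivity)]
        · rw [inv_pow, Real.sq_sqrt ha.le]
        · rw [mul_pow, Real.sq_sqrt ha.le, sq_abs]

theorem aemeasurable_restrict_Ico_of_intervalIntegrable {μ : Measure ℝ} [NullSingletonClass μ]
    {v : ℝ → ℝ} {a b : ℝ} (hab : a < b) (hv : ∀ x ∈ Ico a b, IntervalIntegrable v μ a x) :
    AEMeasurable v (μ.restrict (Ico a b)) := by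
  obtain ⟨x, -, hx_mem, hx_lim⟩ := exists_seq_strictMono_tendsto' hab
  refine (aecover_Ico_of_Ioc tendsto_const_nhds hx_lim).aemeasurable fun n => ?_
  exact (hv (x n) (Ioo_subset_Ico_self (hx_mem n))).1.aestronglyMeasurable.aemeasurable
    |>.mono_measure (Measure.restrict_mono subset_rfl Measure.restrict_le_self)

theorem integral_one_sub_rpow {a b r : ℝ} (h : -1 < r ∨ r ≠ -1 ∧ (1 : ℝ) ∉ uIcc a b) :
    ∫ t in a..b, (1 - t) ^ r = ((1 - a) ^ (r + 1) - (1 - b) ^ (r + 1)) / (r + 1) := by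
  rw [intervalIntegral.integral_comp_sub_left (fun s => s ^ r), integral_rpow]
  refine h.imp_right fun ⟨hr, h1⟩ => ⟨hr, fun h0 => h1 ?_⟩
  rw [mem_uIcc] at h0 ⊢
  rcases h0 with ⟨hb, ha⟩ | ⟨ha, hb⟩
  · exact Or.inl ⟨by linarith, by linarith⟩
  · exact Or.inr ⟨by linarith, by linarith⟩

theorem setLIntegral_Icc_one_sub_rpow_le {a x r : ℝ} (hr : r < -1) (hx : x < 1) :
    ∫⁻ t in Icc a x, ENNReal.ofReal ((1 - t) ^ r)
      ≤ ENNReal.ofReal ((1 - x) ^ (r + 1) / -(r + 1)) := by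
  rcases lt_or_ge x a with hxa | hax
  · simp [Icc_eq_empty_of_lt hxa]
  have h_cont : ContinuousOn (fun t : ℝ => (1 - t) ^ r) (Icc a x) :=
    ContinuousOn.rpow_const (by fun_prop) fun t ht => Or.inl (by linarith [ht.2])
  rw [← ofReal_integral_eq_lintegral_ofReal h_cont.integrableOn_Icc, integral_Icc_eq_integral_Ioc,
    ← intervalIntegral.integral_of_le hax, integral_one_sub_rpow (Or.inr ⟨hr.ne, ?_⟩)]
  · apply ENNReal.ofReal_le_ofReal
    rw [div_neg, ← neg_div, le_div_iff_of_neg (by linarith), div_mul_cancel₀ _ (by linarith)]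
    linarith [Real.rpow_nonneg (by linarith : (0 : ℝ) ≤ 1 - a) (r + 1)]
  · rw [uIcc_of_le hax]
    exact fun h1 => hx.not_ge h1.2
  · filter_upwards [ae_restrict_mem measurableSet_Icc] with t ht
    exact Real.rpow_nonneg (by linarith [ht.2]) r

theorem setLIntegral_Ico_one_sub_rpow {t r : ℝ} (hr : -1 < r) (ht : t ≤ 1) :
    ∫⁻ x in Ico t 1, ENNReal.ofReal ((1 - x) ^ r)
      = ENNReal.ofReal ((1 - t) ^ (r + 1) / (r + 1)) := by
  have h_int : IntervalIntegrable (fun x : ℝ => (1 - x) ^ r) volume t 1 := by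
    simpa using
      (intervalIntegral.intervalIntegrable_rpow' hr (a := 1 - t) (b := 0)).comp_sub_left 1
  rw [setLIntegral_congr Ico_ae_eq_Ioc, ← ofReal_integral_eq_lintegral_ofReal h_int.1,
    ← intervalIntegral.integral_of_le ht, integral_one_sub_rpow (Or.inl hr), sub_self,
    Real.zero_rpow (by linarith), sub_zero]
  filter_upwards [ae_restrict_mem measurableSet_Ioc] with x hx
  exact Real.rpow_nonneg (by linarith [hx.2]) r

theorem setLIntegral_Ico_mul_setLIntegral_Icc_swap {μ : Measure ℝ} [SFinite μ] {a b : ℝ}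
    {F G : ℝ → ℝ≥0∞} (hF : AEMeasurable F (μ.restrict (Ico a b)))
    (hG : AEMeasurable G (μ.restrict (Ico a b))) :
    ∫⁻ x in Ico a b, F x * ∫⁻ t in Icc a x, G t ∂μ ∂μ
      = ∫⁻ t in Ico a b, G t * ∫⁻ x in Ico t b, F x ∂μ ∂μ := by
  set K : ℝ → ℝ → ℝ≥0∞ := fun x t => (Iic x).indicator (fun t => F x * G t) t
  have hK : AEMeasurable (Function.uncurry K)
      ((μ.restrict (Ico a b)).prod (μ.restrict (Ico a b))) :=
    (hF.comp_fst.mul hG.comp_snd).indicator (measurableSet_le measurable_snd measurable_fst)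
  have h_inner_left :
      ∀ x ∈ Ico a b, F x * ∫⁻ t in Icc a x, G t ∂μ = ∫⁻ t in Ico a b, K x t ∂μ := by
    intro x hx
    have h_set : Iic x ∩ Ico a b = Icc a x := by
      ext y; simp only [mem_inter_iff, mem_Iic, mem_Ico, mem_Icc]; grind
    rw [lintegral_indicator measurableSet_Iic, Measure.restrict_restrict measurableSet_Iic, h_set,
      lintegral_const_mul'' _ (hG.mono_set (Icc_subset_Ico_right hx.2))]
  have h_inner_right :
      ∀ t ∈ Ico a b, G t * ∫⁻ x in Ico t b, F x ∂μ = ∫⁻ x in Ico a b, K x t ∂μ := by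
    intro t ht
    have h_ind : ∀ x, K x t = (Ici t).indicator (fun x => G t * F x) x := fun x => by
      simp only [K, indicator_apply, mem_Iic, mem_Ici, mul_comm]
    simp_rw [h_ind]
    rw [lintegral_indicator measurableSet_Ici, Measure.restrict_restrict measurableSet_Ici,
      Ici_inter_Ico_of_le ht.1, lintegral_const_mul'' _ (hF.mono_set (Ico_subset_Ico_left ht.1))]
  rw [setLIntegral_congr_fun measurableSet_Ico h_inner_left,
    setLIntegral_congr_fun measurableSet_Ico h_inner_right]
  exact lintegral_lintegral_swap hK

theorem ofReal_sq_intervalIntegral_le {v : ℝ → ℝ} {x : ℝ}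
    (hv : AEMeasurable v (volume.restrict (Icc 0 x))) (hx0 : 0 ≤ x) (hx1 : x < 1) :
    ENNReal.ofReal ((∫ t in 0..x, v t) ^ 2)
      ≤ 2 * ENNReal.ofReal ((1 - x) ^ (-(1 / 2) : ℝ))
        * ∫⁻ t in Icc 0 x, ENNReal.ofReal ((1 - t) ^ (3 / 2 : ℝ) * v t ^ 2) := by
  have h_abs : ‖∫ t in 0..x, v t‖ₑ ≤ ∫⁻ t in Icc 0 x, ‖v t‖ₑ := by
    rw [intervalIntegral.integral_of_le hx0, setLIntegral_congr Ioc_ae_eq_Icc.symm]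
    exact enorm_integral_le_lintegral_enorm _
  have h_weight : ∫⁻ t in Icc 0 x, ENNReal.ofReal ((1 - t) ^ (3 / 2 : ℝ))⁻¹
      ≤ 2 * ENNReal.ofReal ((1 - x) ^ (-(1 / 2) : ℝ)) :=
    calc ∫⁻ t in Icc 0 x, ENNReal.ofReal ((1 - t) ^ (3 / 2 : ℝ))⁻¹
        = ∫⁻ t in Icc 0 x, ENNReal.ofReal ((1 - t) ^ (-(3 / 2) : ℝ)) :=
          setLIntegral_congr_fun measurableSet_Icc fun t ht => by
            rw [Real.rpow_neg (by linarith [ht.2])]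
      _ ≤ ENNReal.ofReal ((1 - x) ^ (-(3 / 2) + 1 : ℝ) / -(-(3 / 2) + 1)) :=
          setLIntegral_Icc_one_sub_rpow_le (by norm_num) hx1
      _ = 2 * ENNReal.ofReal ((1 - x) ^ (-(1 / 2) : ℝ)) := by
          rw [← ENNReal.ofReal_ofNat 2, ← ENNReal.ofReal_mul zero_le_two]
          congr 1
          norm_num
          ring
  have h_pos : ∀ᵐ t ∂volume.restrict (Icc 0 x), 0 < (1 - t) ^ (3 / 2 : ℝ) := by
    filter_upwards [ae_restrict_mem measurableSet_Icc] with t ht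
    exact Real.rpow_pos_of_pos (by linarith [ht.2]) _
  calc ENNReal.ofReal ((∫ t in 0..x, v t) ^ 2)
      = ‖∫ t in 0..x, v t‖ₑ ^ 2 := by
        rw [Real.enorm_eq_ofReal_abs, ← ENNReal.ofReal_pow (abs_nonneg _), sq_abs]
    _ ≤ (∫⁻ t in Icc 0 x, ‖v t‖ₑ) ^ 2 := pow_le_pow_left₀ zero_le h_abs 2
    _ ≤ (∫⁻ t in Icc 0 x, ENNReal.ofReal ((1 - t) ^ (3 / 2 : ℝ))⁻¹)
          * ∫⁻ t in Icc 0 x, ENNReal.ofReal ((1 - t) ^ (3 / 2 : ℝ) * v t ^ 2) :=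
        sq_lintegral_enorm_le_mul hv (by fun_prop) h_pos
    _ ≤ _ := by gcongr

theorem hardy_inequality_general (u v : ℝ → ℝ)
    (hftc : ∀ x ∈ Ico (0:ℝ) 1,
      IntervalIntegrable v volume 0 x ∧ u x = ∫ t in (0:ℝ)..x, v t) :
    (∫⁻ t in Ico (0:ℝ) 1, ENNReal.ofReal ((u t) ^ 2))
      ≤ 4 * ∫⁻ t in Ico (0:ℝ) 1, ENNReal.ofReal ((1 - t) ^ 2 * (v t) ^ 2) := by
  have hv : AEMeasurable v (volume.restrict (Ico 0 1)) :=
    aemeasurable_restrict_Ico_of_intervalIntegrable zero_lt_one fun x hx => (hftc x hx).1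
  set F : ℝ → ℝ≥0∞ := fun x => ENNReal.ofReal ((1 - x) ^ (-(1 / 2) : ℝ))
  set G : ℝ → ℝ≥0∞ := fun t => ENNReal.ofReal ((1 - t) ^ (3 / 2 : ℝ) * v t ^ 2)
  have h_tail : ∀ t ∈ Ico (0 : ℝ) 1, 2 * (G t * ∫⁻ x in Ico t 1, F x)
      = 4 * ENNReal.ofReal ((1 - t) ^ 2 * v t ^ 2) := by
    intro t ht
    have h1t : 0 < 1 - t := by linarith [ht.2]
    have h_real :
        (1 - t) ^ (3 / 2 : ℝ) * v t ^ 2 * ((1 - t) ^ (-(1 / 2) + 1 : ℝ) / (-(1 / 2) + 1))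
          = 2 * ((1 - t) ^ 2 * v t ^ 2) := by
      rw [mul_comm, ← mul_assoc, div_mul_eq_mul_div, ← Real.rpow_add h1t]
      norm_num
      ring
    rw [setLIntegral_Ico_one_sub_rpow (by norm_num) ht.2.le, ← ENNReal.ofReal_mul (by positivity),
      h_real, ENNReal.ofReal_mul zero_le_two, ← mul_assoc]
    norm_num
  calc ∫⁻ x in Ico 0 1, ENNReal.ofReal (u x ^ 2)
      ≤ ∫⁻ x in Ico 0 1, 2 * (F x * ∫⁻ t in Icc 0 x, G t) :=
        setLIntegral_mono' measurableSet_Ico fun x hx => by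
          rw [(hftc x hx).2, ← mul_assoc]
          exact ofReal_sq_intervalIntegral_le (hv.mono_set (Icc_subset_Ico_right hx.2)) hx.1 hx.2
    _ = 2 * ∫⁻ t in Ico 0 1, G t * ∫⁻ x in Ico t 1, F x := by
        rw [lintegral_const_mul' _ _ ENNReal.ofNat_ne_top,
          setLIntegral_Ico_mul_setLIntegral_Icc_swap (by fun_prop) (by fun_prop)]
    _ = 4 * ∫⁻ t in Ico 0 1, ENNReal.ofReal ((1 - t) ^ 2 * v t ^ 2) := by
        rw [← lintegral_const_mul' _ _ ENNReal.ofNat_ne_top,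
          ← lintegral_const_mul' _ _ ENNReal.ofNat_ne_top]
        exact setLIntegral_congr_fun measurableSet_Ico h_tail

/-- **Hardy-type inequality.** If `u : [0,1) → ℝ` is locally absolutely continuous with
`u 0 = 0` (encoded via the fundamental theorem of calculus: `v` is locally integrable on
`[0,1)` and `u x = ∫₀ˣ v`), then `∫₀¹ u² ≤ 4 ∫₀¹ (1−t)² u'²`, both sides possibly infinite
(stated with lower Lebesgue integrals). -/
theorem hardy_inequality (u v : ℝ → ℝ)
    (hu0 : u 0 = 0)
    (hftc : ∀ x ∈ Ico (0:ℝ) 1,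
      IntervalIntegrable v volume 0 x ∧ u x = ∫ t in (0:ℝ)..x, v t) :
    (∫⁻ t in Ico (0:ℝ) 1, ENNReal.ofReal ((u t) ^ 2))
      ≤ 4 * ∫⁻ t in Ico (0:ℝ) 1, ENNReal.ofReal ((1 - t) ^ 2 * (v t) ^ 2) :=
  hardy_inequality_general u v hftc
end
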